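/- arXiv:2207.04990 — 4 statements merged into one kernel-verified Lean document; each statement's English description precedes it below -/
import Mathlib

section
/- Let n be a positive integer. Then in LCTR, SG((n²)) = SG((2ⁿ)) = 2 if n is odd, and SG((n²)) = SG((2ⁿ)) = 0 if n is even, where (n²) denotes the partition with two parts equal to n and (2ⁿ) the partition with n parts equal to 2. -/
/-- Remove the left column of a Young diagram: subtract 1 from each part and
omit nonpositive values. -/
def leftCol (l : List ℕ) : List ℕ := (l.map (· - 1)).filter (0 < ·)

/-- Remove the top row of a Young diagram. -/
def topRow (l : List ℕ) : List ℕ := l.tail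

/-- Minimum excluded value of a set of naturals. -/
noncomputable def mex (s : Set ℕ) : ℕ := sInf {n | n ∉ s}

def wt (l : List ℕ) : ℕ := l.sum + l.length

lemma wt_leftCol_le (l : List ℕ) : wt (leftCol l) ≤ l.sum := by
  induction l with
  | nil => simp [leftCol, wt]
  | cons a t ih =>
    simp only [leftCol, wt] at ih ⊢
    rw [List.map_cons, List.filter_cons]
    by_cases h : 0 < a - 1
    · simp only [h, decide_true, if_true, List.sum_cons, List.length_cons]
      omega
    · simp only [h, decide_false, Bool.false_eq_true, if_false, List.sum_cons]
      omega

lemma wt_leftCol_lt (l : List ℕ) (h : l ≠ []) : wt (leftCol l) < wt l := by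
  have h1 := wt_leftCol_le l
  have h2 : 0 < l.length := List.length_pos_iff.mpr h
  unfold wt at *
  omega

lemma wt_topRow_lt (l : List ℕ) (h : l ≠ []) : wt (topRow l) < wt l := by
  cases l with
  | nil => exact absurd rfl h
  | cons a t => simp [topRow, wt]; omega

/-- The Sprague–Grundy value of a position in the LCTR game. -/
noncomputable def SG (l : List ℕ) : ℕ :=
  if h : l = [] then 0
  else mex {SG (leftCol l), SG (topRow l)}
termination_by wt l
decreasing_by
  · exact wt_leftCol_lt l h
  · exact wt_topRow_lt l h

/-- A partition: a non-increasing list of positive integers. -/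
def IsPartition (l : List ℕ) : Prop := l.Pairwise (· ≥ ·) ∧ ∀ x ∈ l, 0 < x

/-- The conjugate partition: the `j`-th part (for `1 ≤ j ≤ l₁`) is the number
of parts of `l` that are at least `j`. -/
def conj (l : List ℕ) : List ℕ :=
  (List.range (l.headD 0)).map (fun j => l.countP (fun x => decide (j < x)))

/-!
Conjugating a partition exchanges the two moves of LCTR: removing the left column of `λ` is
removing the top row of its conjugate `λ'`, and vice versa, so `SG λ' = SG λ` by induction.
As `(2ⁿ)` is the conjugate of `(n²)`, it remains to evaluate `SG (n, n)`. Its options are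
`(n - 1, n - 1)` and the single row `(n)`, whose value alternates `1, 2, 1, 2, …` (its options
are `(n - 1)` and the empty partition); induction on `n` then gives `2, 0, 2, 0, …`.
-/

lemma mex_pair_eq {a b c : ℕ} (ha : c ≠ a) (hb : c ≠ b) (hlt : ∀ k < c, k = a ∨ k = b) :
    mex {a, b} = c := by
  refine le_antisymm (Nat.sInf_le (by simp [ha, hb])) (le_csInf ⟨c, by simp [ha, hb]⟩ ?_)
  intro k hk
  by_contra! hkc
  exact hk (by rcases hlt k hkc with rfl | rfl <;> simp)

lemma SG_nil : SG [] = 0 := by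
  rw [SG]; simp

lemma SG_eq_mex {l : List ℕ} (h : l ≠ []) : SG l = mex {SG (leftCol l), SG (topRow l)} := by
  rw [SG]; simp [h]

lemma List.filter_lt_range {a b : ℕ} (h : b ≤ a) :
    (List.range a).filter (fun j => decide (j < b)) = List.range b := by
  obtain ⟨c, rfl⟩ := Nat.exists_eq_add_of_le h
  rw [List.range_add, List.filter_append, List.filter_eq_self.2 (by simp),
    List.filter_eq_nil_iff.2 (by simp), List.append_nil]

namespace IsPartition

variable {l : List ℕ}

lemma topRow (hl : IsPartition l) : IsPartition (topRow l) :=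
  ⟨hl.1.sublist (List.tail_sublist l), fun x hx => hl.2 x (List.mem_of_mem_tail hx)⟩

lemma leftCol (hl : IsPartition l) : IsPartition (leftCol l) := by
  refine ⟨(List.pairwise_map.2 (hl.1.imp fun h => Nat.sub_le_sub_right h 1)).filter _, ?_⟩
  intro x hx
  simpa using (List.mem_filter.1 hx).2

lemma le_headD (hl : IsPartition l) {x : ℕ} (hx : x ∈ l) : x ≤ l.headD 0 := by
  cases l with
  | nil => simp at hx
  | cons a t =>
    rcases List.mem_cons.1 hx with rfl | hx
    · exact le_rfl
    · exact (List.pairwise_cons.1 hl.1).1 x hx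

end IsPartition

lemma countP_lt_pos_iff {l : List ℕ} (hl : IsPartition l) (j : ℕ) :
    0 < l.countP (fun x => decide (j < x)) ↔ j < l.headD 0 := by
  cases l with
  | nil => simp
  | cons a t =>
    simp only [List.countP_pos_iff, List.mem_cons, decide_eq_true_eq, List.headD_cons]
    constructor
    · rintro ⟨x, hx, hjx⟩
      exact hjx.trans_le (hl.le_headD (List.mem_cons.2 hx))
    · exact fun h => ⟨a, Or.inl rfl, h⟩

lemma countP_lt_leftCol (l : List ℕ) (j : ℕ) :
    (leftCol l).countP (fun x => decide (j < x)) = l.countP (fun x => decide (j + 1 < x)) := by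
  simp only [leftCol, List.countP_filter, List.countP_map]
  congr 1
  funext x
  simp only [Function.comp, ← Bool.decide_and, decide_eq_decide]
  omega

lemma headD_leftCol {l : List ℕ} (hl : IsPartition l) : (leftCol l).headD 0 = l.headD 0 - 1 := by
  cases l with
  | nil => rfl
  | cons a t =>
    rcases Nat.lt_or_ge 1 a with ha | ha
    · simp [leftCol, show 0 < a - 1 by omega]
    · have hnil : leftCol (a :: t) = [] := by
        simp only [leftCol, List.filter_eq_nil_iff, List.mem_map, decide_eq_true_eq]
        rintro _ ⟨x, hx, rfl⟩
        have hxa : x ≤ a := hl.le_headD hx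
        omega
      rw [hnil, List.headD_nil, List.headD_cons]
      omega

lemma topRow_conj {l : List ℕ} (hl : IsPartition l) : topRow (conj l) = conj (leftCol l) := by
  rw [topRow, conj, conj, headD_leftCol hl]
  cases l.headD 0 with
  | zero => rfl
  | succ k =>
    rw [Nat.add_sub_cancel, List.range_succ_eq_map, List.map_cons, List.tail_cons, List.map_map]
    exact List.map_congr_left fun j _ => (countP_lt_leftCol l j).symm

lemma leftCol_conj {l : List ℕ} (hl : IsPartition l) : leftCol (conj l) = conj (topRow l) := by
  cases l with
  | nil => rfl
  | cons a t =>
    have ht : IsPartition t := hl.topRow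
    have hmap : (conj (a :: t)).map (· - 1) =
        (List.range a).map (fun j => t.countP (fun x => decide (j < x))) := by
      simp only [conj, List.headD_cons, List.map_map]
      refine List.map_congr_left fun j hj => ?_
      simp [List.countP_cons, List.mem_range.1 hj]
    have hb : t.headD 0 ≤ a := by
      cases t with
      | nil => exact Nat.zero_le a
      | cons b u => exact hl.le_headD (by simp)
    rw [leftCol, hmap, List.filter_map, topRow, List.tail_cons, conj, ← List.filter_lt_range hb]
    congr 2
    funext j
    simp [countP_lt_pos_iff ht j]

lemma conj_ne_nil {l : List ℕ} (hl : IsPartition l) (h : l ≠ []) : conj l ≠ [] := by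
  obtain ⟨a, t, rfl⟩ := List.exists_cons_of_ne_nil h
  simpa [conj] using (hl.2 a (List.mem_cons_self)).ne'

theorem SG_conj (l : List ℕ) (hl : IsPartition l) : SG (conj l) = SG l := by
  rcases eq_or_ne l [] with rfl | hne
  · rfl
  rw [SG_eq_mex (conj_ne_nil hl hne), SG_eq_mex hne, leftCol_conj hl, topRow_conj hl,
    SG_conj (topRow l) hl.topRow, SG_conj (leftCol l) hl.leftCol, Set.pair_comm]
termination_by wt l
decreasing_by
  · exact wt_topRow_lt l hne
  · exact wt_leftCol_lt l hne

lemma conj_replicate_two (n : ℕ) : conj (List.replicate 2 n) = List.replicate n 2 := by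
  refine List.eq_replicate_iff.2 ⟨by simp [conj], fun x hx => ?_⟩
  obtain ⟨j, hj, rfl⟩ := List.mem_map.1 hx
  replace hj : j < n := List.mem_range.1 hj
  simp [hj]

lemma SG_singleton {n : ℕ} (hn : 1 ≤ n) : SG [n] = if Odd n then 1 else 2 := by
  induction n, hn using Nat.le_induction with
  | base =>
    rw [SG_eq_mex (List.cons_ne_nil _ _), if_pos odd_one]
    show mex {SG [], SG []} = 1
    rw [SG_nil]
    exact mex_pair_eq (by decide) (by decide) (by decide)
  | succ n hn ih =>
    have hL : leftCol [n + 1] = [n] := by simp [leftCol]; omega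
    rw [SG_eq_mex (List.cons_ne_nil _ _), hL, topRow, List.tail, SG_nil, ih]
    rcases Nat.even_or_odd n with he | ho
    · simp only [if_neg (Nat.not_odd_iff_even.2 he), if_pos he.add_one]
      exact mex_pair_eq (by decide) (by decide) (by decide)
    · simp only [if_pos ho, if_neg (Nat.not_odd_iff_even.2 ho.add_one)]
      exact mex_pair_eq (by decide) (by decide) (by decide)

lemma SG_pair_self {n : ℕ} (hn : 1 ≤ n) : SG [n, n] = if Odd n then 2 else 0 := by
  induction n, hn using Nat.le_induction with
  | base =>
    rw [SG_eq_mex (List.cons_ne_nil _ _), if_pos odd_one]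
    show mex {SG [], SG [1]} = 2
    rw [SG_nil, SG_singleton le_rfl, if_pos odd_one]
    exact mex_pair_eq (by decide) (by decide) (by decide)
  | succ n hn ih =>
    have hL : leftCol [n + 1, n + 1] = [n, n] := by simp [leftCol]; omega
    rw [SG_eq_mex (List.cons_ne_nil _ _), hL, topRow, List.tail, ih,
      SG_singleton (Nat.le_add_left 1 n)]
    rcases Nat.even_or_odd n with he | ho
    · simp only [if_neg (Nat.not_odd_iff_even.2 he), if_pos he.add_one]
      exact mex_pair_eq (by decide) (by decide) (by decide)
    · simp only [if_pos ho, if_neg (Nat.not_odd_iff_even.2 ho.add_one)]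
      exact mex_pair_eq (by decide) (by decide) (by decide)

/-- The partitions `(n²)` and `(2ⁿ)` have Sprague–Grundy value 2 if `n` is odd
and 0 if `n` is even. -/
theorem SG_two_rows (n : ℕ) (hn : 0 < n) :
    (Odd n → SG (List.replicate 2 n) = 2 ∧ SG (List.replicate n 2) = 2) ∧
    (Even n → SG (List.replicate 2 n) = 0 ∧ SG (List.replicate n 2) = 0) := by
  have hpart : IsPartition (List.replicate 2 n) := ⟨by simp, by simp [hn]⟩
  have hcols : SG (List.replicate n 2) = SG (List.replicate 2 n) := by
    rw [← conj_replicate_two, SG_conj _ hpart]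
  have hrows : SG (List.replicate 2 n) = if Odd n then 2 else 0 := SG_pair_self hn
  rw [hcols, hrows]
  exact ⟨fun ho => by simp [ho], fun he => by simp [Nat.not_odd_iff_even.2 he]⟩
end

section
/- Let m and n be integers, each at least 3. Then in LCTR, the rectangular partition (nᵐ) (m parts all equal to n) satisfies SG((nᵐ)) = 0 if m + n is even, and SG((nᵐ)) = 1 if m + n is odd. -/
/-!
Write `g m n` for the Sprague–Grundy value of the `m × n` rectangle. Both moves keep a
rectangle a rectangle, so `g (m+1) (n+1) = mex {g (m+1) n, g m (n+1)}` with `g` vanishing on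
the axes, and `g` is symmetric. Filling in the table: the first row reads `1, 2, 1, 2, …`, the
second `2, 0, 2, 0, …`, the third from its third entry on `0, 1, 0, 1, …`; from then on every
entry is the mex of two equal neighbours in `{0, 1}`, which produces the checkerboard
`(m + n) % 2`.
-/

-- `List.replicate m 0` is not the empty diagram: its SG value is that of `List.replicate m 1`.
def rect (m n : ℕ) : List ℕ := if n = 0 then [] else List.replicate m n

lemma rect_of_ne_zero (m : ℕ) {n : ℕ} (hn : n ≠ 0) : rect m n = List.replicate m n :=
  if_neg hn

lemma SG_of_ne_nil {l : List ℕ} (hl : l ≠ []) : SG l = mex {SG (leftCol l), SG (topRow l)} := by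
  rw [SG, dif_neg hl]

lemma mex_eq_of_notMem {s : Set ℕ} {k : ℕ} (hk : k ∉ s) (hlt : ∀ j < k, j ∈ s) :
    mex s = k :=
  le_antisymm (Nat.sInf_le hk)
    (not_lt.1 fun h => Nat.sInf_mem (s := {n | n ∉ s}) ⟨k, hk⟩ (hlt _ h))

lemma mex_pair (a b : ℕ) :
    mex {a, b} = if a ≠ 0 ∧ b ≠ 0 then 0 else if a ≠ 1 ∧ b ≠ 1 then 1 else 2 := by
  split_ifs <;>
    exact mex_eq_of_notMem (by simp only [Set.mem_insert_iff, Set.mem_singleton_iff]; omega)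
      (by simp only [Set.mem_insert_iff, Set.mem_singleton_iff]; omega)

@[simp]
lemma rect_zero_left (n : ℕ) : rect 0 n = [] := by
  simp [rect]

@[simp]
lemma rect_zero_right (m : ℕ) : rect m 0 = [] := by
  simp [rect]

lemma rect_succ_succ_ne_nil (m n : ℕ) : rect (m + 1) (n + 1) ≠ [] := by
  simp [rect]

lemma leftCol_rect (m n : ℕ) : leftCol (rect m (n + 1)) = rect m n := by
  rcases Nat.eq_zero_or_pos n with rfl | hn
  · simp [rect, leftCol]
  · simp [rect, leftCol, List.map_replicate, hn.ne', hn]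

lemma topRow_rect (m n : ℕ) : topRow (rect (m + 1) n) = rect m n := by
  by_cases hn : n = 0 <;> simp [rect, topRow, hn, List.replicate_succ]

lemma SG_rect_succ_succ (m n : ℕ) :
    SG (rect (m + 1) (n + 1)) = mex {SG (rect (m + 1) n), SG (rect m (n + 1))} := by
  rw [SG_of_ne_nil (rect_succ_succ_ne_nil m n), leftCol_rect, topRow_rect]

lemma SG_rect_comm (m n : ℕ) : SG (rect m n) = SG (rect n m) := by
  induction m generalizing n with
  | zero => simp
  | succ m ihm =>
    induction n with
    | zero => simp
    | succ n ihn => rw [SG_rect_succ_succ, SG_rect_succ_succ, ihn, ihm, Set.pair_comm]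

lemma SG_rect_succ_one (m : ℕ) : SG (rect (m + 1) 1) = m % 2 + 1 := by
  induction m with
  | zero => rw [SG_rect_succ_succ, rect_zero_right, rect_zero_left, SG_nil, mex_pair]; rfl
  | succ m ih =>
    rw [SG_rect_succ_succ, ih, rect_zero_right, SG_nil, mex_pair]
    split_ifs <;> omega

lemma SG_rect_two (n : ℕ) : SG (rect 2 (n + 2)) = 2 * (n % 2) := by
  induction n with
  | zero =>
    rw [SG_rect_succ_succ, SG_rect_succ_one, SG_rect_comm, SG_rect_succ_one, mex_pair]; rfl
  | succ n ih =>
    rw [SG_rect_succ_succ, ih, SG_rect_comm, SG_rect_succ_one, mex_pair]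
    split_ifs <;> omega

lemma SG_rect_three (n : ℕ) : SG (rect 3 (n + 3)) = n % 2 := by
  induction n with
  | zero => rw [SG_rect_succ_succ, SG_rect_comm 3 2, SG_rect_two, mex_pair]; rfl
  | succ n ih =>
    rw [SG_rect_succ_succ, ih, SG_rect_two, mex_pair]
    split_ifs <;> omega

lemma SG_rect_add_three (m n : ℕ) : SG (rect (m + 3) (n + 3)) = (m + n) % 2 := by
  induction m generalizing n with
  | zero => simpa using SG_rect_three n
  | succ m ihm =>
    induction n with
    | zero => rw [SG_rect_comm, SG_rect_three]
    | succ n ihn =>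
      rw [SG_rect_succ_succ, ihn, ihm, mex_pair]
      split_ifs <;> omega

/-- For `m, n ≥ 3`, the rectangle `(nᵐ)` has Sprague–Grundy value 0 if `m + n`
is even and 1 if `m + n` is odd. -/
theorem SG_rectangle (m n : ℕ) (hm : 3 ≤ m) (hn : 3 ≤ n) :
    (Even (m + n) → SG (List.replicate m n) = 0) ∧
    (Odd (m + n) → SG (List.replicate m n) = 1) := by
  obtain ⟨m, rfl⟩ := Nat.exists_eq_add_of_le' hm
  obtain ⟨n, rfl⟩ := Nat.exists_eq_add_of_le' hn
  rw [← rect_of_ne_zero _ (Nat.add_one_ne_zero (n + 2)), SG_rect_add_three, Nat.even_iff,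
    Nat.odd_iff]
  omega
end

section
/- Let λ be a nonempty quadrated partition. Then L(T(λ)) = T(L(λ)), and if this partition is not of the form (n) (a single row) or (1ⁿ) (a single column), then SG(L(T(λ))) = 0, i.e., L(T(λ)) is a P-position in LCTR. -/
/-- A quadrated partition: all parts are even and each part occurs an even
number of times. -/
def Quadrated (l : List ℕ) : Prop :=
  IsPartition l ∧ (∀ x ∈ l, Even x) ∧ (∀ x : ℕ, Even (l.count x))

/-!
Call a position *doubled even* if it has the form `(b₁, b₁, …, bₖ, bₖ)` with all `bᵢ` even
and positive. These are P-positions: the second player answers every move by the same move,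
which restores the shape. A position `(a, b₁, b₁, …, bₖ, bₖ)` with all entries odd, `a ≥ 3` and
`k ≥ 1` is then a P-position too, since each of its two moves can be answered by the other one,
reaching the doubled even position `L(b₁, b₁, …, bₖ, bₖ)`. For a quadrated
`λ = (c, c, b₁, b₁, …, bₖ, bₖ)` the position `L(T(λ)) = (c - 1, b₁ - 1, b₁ - 1, …)` has this
second shape, except when `k = 0` (a single row) or `c = 2` (a single column).
-/

lemma leftCol_cons_of_one_lt {a : ℕ} (h : 1 < a) (t : List ℕ) :
    leftCol (a :: t) = (a - 1) :: leftCol t := by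
  simp [leftCol, Nat.sub_pos_of_lt h]

lemma leftCol_cons_of_le_one {a : ℕ} (h : a ≤ 1) (t : List ℕ) :
    leftCol (a :: t) = leftCol t := by
  simp [leftCol, Nat.sub_eq_zero_of_le h]

lemma mem_leftCol {y : ℕ} {l : List ℕ} : y ∈ leftCol l ↔ 0 < y ∧ y + 1 ∈ l := by
  simp only [leftCol, List.mem_filter, List.mem_map, decide_eq_true_eq]
  constructor
  · rintro ⟨⟨x, hx, rfl⟩, hy⟩
    exact ⟨hy, by rwa [Nat.sub_add_cancel (by omega)]⟩
  · rintro ⟨hy, hl⟩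
    exact ⟨⟨y + 1, hl, rfl⟩, hy⟩

lemma leftCol_topRow_cons {a : ℕ} (h : 1 < a) (t : List ℕ) :
    leftCol (topRow (a :: t)) = topRow (leftCol (a :: t)) := by
  rw [leftCol_cons_of_one_lt h]
  rfl

lemma mex_eq_zero_iff {s : Set ℕ} (hs : s.Finite) : mex s = 0 ↔ 0 ∉ s := by
  have hne : {n | n ∉ s} ≠ ∅ := hs.infinite_compl.nonempty.ne_empty
  simp [mex, Nat.sInf_eq_zero, hne]

def IsMove (l m : List ℕ) : Prop := l ≠ [] ∧ (m = leftCol l ∨ m = topRow l)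

lemma IsMove.wt_lt {l m : List ℕ} (h : IsMove l m) : wt m < wt l := by
  rcases h with ⟨hl, rfl | rfl⟩
  · exact wt_leftCol_lt l hl
  · exact wt_topRow_lt l hl

lemma SG_eq_zero_iff (l : List ℕ) : SG l = 0 ↔ ∀ m, IsMove l m → SG m ≠ 0 := by
  by_cases hl : l = []
  · subst hl
    simp [SG_nil, IsMove]
  · rw [SG, dif_neg hl, mex_eq_zero_iff (Set.toFinite _)]
    simp [IsMove, hl, eq_comm]

lemma SG_ne_zero_of_isMove {l m : List ℕ} (h : IsMove l m) (hm : SG m = 0) : SG l ≠ 0 :=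
  fun hl => (SG_eq_zero_iff l).1 hl m h hm

theorem SG_eq_zero_of_forall_isMove {P : List ℕ → Prop}
    (hP : ∀ l m, P l → IsMove l m → ∃ k, IsMove m k ∧ P k) {l : List ℕ} (hl : P l) :
    SG l = 0 := by
  induction hw : wt l using Nat.strong_induction_on generalizing l with
  | _ n ih =>
    refine (SG_eq_zero_iff l).2 fun m hm => ?_
    obtain ⟨k, hk, hPk⟩ := hP l m hl hm
    exact SG_ne_zero_of_isMove hk (ih (wt k) (hw ▸ hk.wt_lt.trans hm.wt_lt) hPk rfl)

def doubleRows {α : Type*} : List α → List α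
  | [] => []
  | a :: w => a :: a :: doubleRows w

section doubleRows

variable {α : Type*}

@[simp]
lemma doubleRows_nil : doubleRows ([] : List α) = [] := rfl

@[simp]
lemma doubleRows_cons (a : α) (w : List α) : doubleRows (a :: w) = a :: a :: doubleRows w :=
  rfl

@[simp]
lemma mem_doubleRows {x : α} {w : List α} : x ∈ doubleRows w ↔ x ∈ w := by
  induction w with
  | nil => rfl
  | cons a w ih => simp [ih]

lemma sublist_doubleRows (w : List α) : w.Sublist (doubleRows w) := by
  induction w with
  | nil => exact List.Sublist.slnil
  | cons a w ih => exact (ih.cons a).cons_cons a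

lemma exists_eq_doubleRows_of_even_count [LinearOrder α] :
    ∀ {l : List α}, l.Pairwise (· ≥ ·) → (∀ x, Even (l.count x)) → ∃ w, l = doubleRows w
  | [], _, _ => ⟨[], rfl⟩
  | [c], _, hc => absurd (hc c) (by simp)
  | c :: d :: t, hs, hc => by
    have hcd : c = d := by
      have hmem : c ∈ d :: t := by
        have := hc c
        rw [List.count_cons_self, Nat.even_add_one] at this
        exact List.count_pos_iff.1 (Nat.pos_of_ne_zero fun h => by simp [h] at this)
      have hdt := List.pairwise_cons.1 (List.pairwise_cons.1 hs).2
      rcases List.mem_cons.1 hmem with h | h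
      · exact h
      · exact le_antisymm (hdt.1 c h) ((List.pairwise_cons.1 hs).1 d List.mem_cons_self)
    subst hcd
    have htail : ∀ x, Even (t.count x) := fun x => by
      have := hc x
      by_cases hx : x = c
      · subst hx
        simpa [Nat.even_add_one] using this
      · simpa [List.count_cons_of_ne (Ne.symm hx)] using this
    obtain ⟨w, rfl⟩ :=
      exists_eq_doubleRows_of_even_count (List.pairwise_cons.1 (List.pairwise_cons.1 hs).2).2 htail
    exact ⟨c :: w, rfl⟩

end doubleRows

lemma leftCol_doubleRows (w : List ℕ) : leftCol (doubleRows w) = doubleRows (leftCol w) := by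
  induction w with
  | nil => rfl
  | cons a w ih =>
    rcases Nat.lt_or_ge 1 a with h | h
    · simp [leftCol_cons_of_one_lt h, ih]
    · simp [leftCol_cons_of_le_one h, ih]

lemma odd_of_mem_leftCol {w : List ℕ} (hw : ∀ x ∈ w, Even x) {y : ℕ} (hy : y ∈ leftCol w) :
    Odd y := by
  obtain ⟨-, hy⟩ := mem_leftCol.1 hy
  simpa [Nat.even_add_one] using hw _ hy

lemma even_of_mem_leftCol {w : List ℕ} (hw : ∀ x ∈ w, Odd x) {y : ℕ} (hy : y ∈ leftCol w) :
    Even y ∧ 0 < y := by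
  obtain ⟨hpos, hy⟩ := mem_leftCol.1 hy
  exact ⟨by simpa [Nat.odd_add_one] using hw _ hy, hpos⟩

/-- Quadrated partitions, without the ordering requirement. -/
def IsDoubledEven (l : List ℕ) : Prop :=
  ∃ w, (∀ x ∈ w, Even x ∧ 0 < x) ∧ l = doubleRows w

def IsOddRowOnDoubledOdd (l : List ℕ) : Prop :=
  ∃ a w, Odd a ∧ 3 ≤ a ∧ w ≠ [] ∧ (∀ x ∈ w, Odd x) ∧ l = a :: doubleRows w

/-- The second player copies the first: `L` is answered by `L`, `T` by `T`. -/
lemma IsDoubledEven.exists_reply {l m : List ℕ} (hl : IsDoubledEven l) (hm : IsMove l m) :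
    ∃ k, IsMove m k ∧ IsDoubledEven k := by
  obtain ⟨_ | ⟨c, w⟩, hw, rfl⟩ := hl
  · exact absurd rfl hm.1
  obtain ⟨-, rfl | rfl⟩ := hm
  · have hc : 1 < c := by
      obtain ⟨⟨k, hk⟩, hpos⟩ := hw c List.mem_cons_self
      omega
    refine ⟨leftCol (leftCol (doubleRows (c :: w))), ⟨?_, Or.inl rfl⟩, ?_⟩
    · simp [leftCol_doubleRows, leftCol_cons_of_one_lt hc]
    · refine ⟨leftCol (leftCol (c :: w)), fun y hy => ?_, by simp only [leftCol_doubleRows]⟩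
      exact even_of_mem_leftCol (fun x hx => odd_of_mem_leftCol (fun z hz => (hw z hz).1) hx) hy
  · exact ⟨doubleRows w, ⟨by simp [topRow], Or.inr rfl⟩,
      w, fun x hx => hw x (List.mem_cons_of_mem c hx), rfl⟩

/-- `L` is answered by `T` and `T` by `L`; both land on `doubleRows (leftCol w)`. -/
lemma IsOddRowOnDoubledOdd.exists_reply {l m : List ℕ} (hl : IsOddRowOnDoubledOdd l)
    (hm : IsMove l m) :
    ∃ k, IsMove m k ∧ IsDoubledEven k := by
  obtain ⟨a, w, -, ha, hw, hodd, rfl⟩ := hl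
  have hL : IsDoubledEven (doubleRows (leftCol w)) :=
    ⟨leftCol w, fun y hy => even_of_mem_leftCol hodd hy, rfl⟩
  obtain ⟨-, rfl | rfl⟩ := hm
  · refine ⟨_, ⟨?_, Or.inr ?_⟩, hL⟩ <;> simp [leftCol_cons_of_one_lt (by omega : 1 < a),
      leftCol_doubleRows, topRow]
  · refine ⟨_, ⟨?_, Or.inl ?_⟩, hL⟩
    · obtain _ | ⟨b, w⟩ := w
      · exact absurd rfl hw
      · simp [topRow]
    · simp [topRow, leftCol_doubleRows]

lemma SG_eq_zero_of_isDoubledEven {l : List ℕ} (hl : IsDoubledEven l) : SG l = 0 :=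
  SG_eq_zero_of_forall_isMove (fun _ _ hl hm => hl.exists_reply hm) hl

lemma SG_eq_zero_of_isOddRowOnDoubledOdd {l : List ℕ} (hl : IsOddRowOnDoubledOdd l) : SG l = 0 :=
  (SG_eq_zero_iff l).2 fun _ hm => by
    obtain ⟨k, hk, hkP⟩ := hl.exists_reply hm
    exact SG_ne_zero_of_isMove hk (SG_eq_zero_of_isDoubledEven hkP)

lemma Quadrated.exists_eq_doubleRows {l : List ℕ} (hl : Quadrated l) :
    ∃ w, l = doubleRows w ∧ w.Pairwise (· ≥ ·) ∧ ∀ x ∈ w, Even x ∧ 0 < x := by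
  obtain ⟨⟨hsorted, hpos⟩, heven, hcount⟩ := hl
  obtain ⟨w, rfl⟩ := exists_eq_doubleRows_of_even_count hsorted hcount
  have hsub := sublist_doubleRows w
  exact ⟨w, rfl, hsorted.sublist hsub,
    fun x hx => ⟨heven x (hsub.subset hx), hpos x (hsub.subset hx)⟩⟩

/-- For a nonempty quadrated partition `λ`, we have `L(T(λ)) = T(L(λ))`, and
if this partition is not a single row `(n)` or a single column `(1ⁿ)`, then it
is a P-position in LCTR. -/
theorem SG_quadrated_LT (l : List ℕ) (hl : Quadrated l) (hne : l ≠ []) :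
    leftCol (topRow l) = topRow (leftCol l) ∧
    ((¬ (∃ n : ℕ, 0 < n ∧ leftCol (topRow l) = [n]) ∧
      ¬ (∃ n : ℕ, 0 < n ∧ leftCol (topRow l) = List.replicate n 1)) →
        SG (leftCol (topRow l)) = 0) := by
  obtain ⟨_ | ⟨c, v⟩, rfl, hsorted, hw⟩ := hl.exists_eq_doubleRows
  · exact absurd rfl hne
  obtain ⟨⟨j, rfl⟩, hj⟩ := hw _ List.mem_cons_self
  have hLT : leftCol (topRow (doubleRows ((j + j) :: v))) =
      (j + j - 1) :: doubleRows (leftCol v) := by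
    simp [topRow, leftCol_cons_of_one_lt (by omega : 1 < j + j), leftCol_doubleRows]
  refine ⟨leftCol_topRow_cons (by omega) _, fun ⟨hrow, hcol⟩ => ?_⟩
  obtain _ | ⟨d, v⟩ := v
  · exact absurd ⟨j + j - 1, by omega, hLT⟩ hrow
  have hd : 1 < d := by
    obtain ⟨⟨i, hi⟩, hpos⟩ := hw d (by simp)
    omega
  by_cases hj1 : j = 1
  · refine absurd ⟨_, List.length_pos_of_mem (List.mem_cons_self (a := j + j - 1)),
      hLT.trans (List.eq_replicate_iff.2 ⟨rfl, fun x hx => ?_⟩)⟩ hcol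
    rcases List.mem_cons.1 hx with rfl | hx
    · omega
    · obtain ⟨hpos, hx⟩ := mem_leftCol.1 (mem_doubleRows.1 hx)
      have := (List.pairwise_cons.1 hsorted).1 _ hx
      omega
  rw [hLT]
  have hodd : ∀ y ∈ leftCol (d :: v), Odd y := fun y hy =>
    odd_of_mem_leftCol (fun x hx => (hw x (List.mem_cons_of_mem _ hx)).1) hy
  exact SG_eq_zero_of_isOddRowOnDoubledOdd ⟨j + j - 1, leftCol (d :: v), ⟨j - 1, by omega⟩,
    by omega, by simp [leftCol_cons_of_one_lt hd], hodd, rfl⟩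
end

section
/- If λ is a partition of N > 0 that is not a rectangle (i.e., not of the form (aᵇ) for positive integers a, b), then the number of distinct partitions reachable from λ in LCTR (i.e., obtainable by one or more applications of the moves L and T, including the empty partition) is strictly less than N. -/
/-- One move in LCTR: remove the left column or the top row of a nonempty partition. -/
def Move (l m : List ℕ) : Prop := l ≠ [] ∧ (m = leftCol l ∨ m = topRow l)

/-- `m` is reachable from `l` by one or more moves of LCTR. -/
def Reachable (l m : List ℕ) : Prop := Relation.TransGen Move l m


/-!
After deleting `j` rows and then `i` columns of the Young diagram of `λ` one is left with the part
of `λ` below and to the right of the cell `(i, j)`, or with nothing if `(i, j)` is not a cell. Every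
reachable position arises this way, so the reachable positions are the empty one together with the
images of the `N` cells; the cell `(0, 0)` gives `λ` itself, which is not reachable since moves
strictly shrink the diagram. If `λ` is not a rectangle, the last cell of a row that is longer than
the next one and the last cell of the bottom row are two different cells that both give the single
box `(1)`, so at most `N - 1` positions are reachable.
-/

def dropColumns (i : ℕ) (l : List ℕ) : List ℕ := (l.map (· - i)).filter (0 < ·)

lemma dropColumns_cons_of_lt {i a : ℕ} (t : List ℕ) (h : i < a) :
    dropColumns i (a :: t) = (a - i) :: dropColumns i t := by
  simp [dropColumns, h]

lemma dropColumns_cons_of_le {i a : ℕ} (t : List ℕ) (h : a ≤ i) :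
    dropColumns i (a :: t) = dropColumns i t := by
  simp [dropColumns, Nat.sub_eq_zero_of_le h]

lemma dropColumns_eq_nil {i : ℕ} {l : List ℕ} (h : ∀ x ∈ l, x ≤ i) :
    dropColumns i l = [] := by
  simp only [dropColumns, List.filter_eq_nil_iff, List.mem_map]
  rintro _ ⟨x, hx, rfl⟩
  simpa using h x hx

lemma dropColumns_zero {l : List ℕ} (hl : ∀ x ∈ l, 0 < x) : dropColumns 0 l = l := by
  simpa [dropColumns] using hl

lemma leftCol_dropColumns (i : ℕ) (l : List ℕ) :
    leftCol (dropColumns i l) = dropColumns (i + 1) l := by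
  change dropColumns 1 _ = _
  induction l with
  | nil => rfl
  | cons a t ih =>
    rcases lt_or_ge (i + 1) a with h | h
    · rw [dropColumns_cons_of_lt _ h, dropColumns_cons_of_lt _ (by omega),
        dropColumns_cons_of_lt _ (by omega), ih, Nat.sub_sub]
    · rw [dropColumns_cons_of_le _ h]
      rcases lt_or_ge i a with h' | h'
      · rw [dropColumns_cons_of_lt _ h', dropColumns_cons_of_le _ (by omega), ih]
      · rw [dropColumns_cons_of_le _ h', ih]

lemma topRow_dropColumns {l : List ℕ} (hl : l.Pairwise (· ≥ ·)) (i : ℕ) :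
    topRow (dropColumns i l) = dropColumns i l.tail := by
  cases l with
  | nil => rfl
  | cons a t =>
    rcases lt_or_ge i a with h | h
    · rw [dropColumns_cons_of_lt _ h]
      rfl
    · have ht : ∀ x ∈ t, x ≤ i := fun x hx => (List.rel_of_pairwise_cons hl hx).trans h
      rw [dropColumns_cons_of_le _ h, dropColumns_eq_nil ht, List.tail_cons,
        dropColumns_eq_nil ht]
      rfl

lemma exists_eq_dropColumns_drop_of_reflTransGen {l μ : List ℕ} (hl : IsPartition l)
    (h : Relation.ReflTransGen Move l μ) : ∃ i j, μ = dropColumns i (l.drop j) := by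
  induction h with
  | refl => exact ⟨0, 0, (dropColumns_zero hl.2).symm⟩
  | tail _ hmove ih =>
    obtain ⟨i, j, rfl⟩ := ih
    rcases hmove.2 with rfl | rfl
    · exact ⟨i + 1, j, leftCol_dropColumns i _⟩
    · refine ⟨i, j + 1, ?_⟩
      rw [topRow_dropColumns (hl.1.sublist (List.drop_sublist j l)), List.tail_drop]

lemma wt_lt_of_move {l m : List ℕ} (h : Move l m) : wt m < wt l := by
  obtain ⟨hne, rfl | rfl⟩ := h
  exacts [wt_leftCol_lt l hne, wt_topRow_lt l hne]

lemma wt_lt_of_reachable {l μ : List ℕ} (h : Reachable l μ) : wt μ < wt l := by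
  induction h with
  | single hmove => exact wt_lt_of_move hmove
  | tail _ hmove ih => exact (wt_lt_of_move hmove).trans ih

lemma le_getElem_of_mem_drop {l : List ℕ} (hl : l.Pairwise (· ≥ ·)) {j : ℕ}
    (hj : j < l.length) {x : ℕ} (hx : x ∈ l.drop j) : x ≤ l[j] := by
  have hs := hl.sublist (List.drop_sublist j l)
  rw [List.drop_eq_getElem_cons hj] at hs hx
  rcases List.mem_cons.1 hx with rfl | hx
  exacts [le_rfl, List.rel_of_pairwise_cons hs hx]

/-- The cell `⟨j, i⟩` is the `i`-th box of the `j`-th row (both counted from `0`). -/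
def cells (l : List ℕ) : Finset (Σ _ : Fin l.length, ℕ) :=
  Finset.univ.sigma fun j => Finset.range l[j]

lemma card_cells (l : List ℕ) : (cells l).card = l.sum := by
  simp [cells, Finset.card_sigma]

def subdiagramAt (l : List ℕ) (c : Σ _ : Fin l.length, ℕ) : List ℕ :=
  dropColumns c.2 (l.drop c.1)

lemma mem_image_subdiagramAt_self {l : List ℕ} (hl : IsPartition l) (hne : l ≠ []) :
    l ∈ (cells l).image (subdiagramAt l) := by
  refine Finset.mem_image.2 ⟨⟨⟨0, List.length_pos_iff.2 hne⟩, 0⟩, ?_, ?_⟩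
  · simpa [cells] using hl.2 _ (List.getElem_mem _)
  · simp [subdiagramAt, dropColumns_zero hl.2]

lemma exists_mem_cells_of_dropColumns_drop_ne_nil {l : List ℕ} (hl : l.Pairwise (· ≥ ·))
    {i j : ℕ} (h : dropColumns i (l.drop j) ≠ []) :
    ∃ c ∈ cells l, subdiagramAt l c = dropColumns i (l.drop j) := by
  by_cases hj : j < l.length
  · refine ⟨⟨⟨j, hj⟩, i⟩, ?_, rfl⟩
    by_contra hi
    simp only [cells, Finset.mem_sigma, Finset.mem_univ, Finset.mem_range, true_and,
      not_lt] at hi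
    exact h (dropColumns_eq_nil fun x hx => (le_getElem_of_mem_drop hl hj hx).trans hi)
  · simp [List.drop_eq_nil_of_le (not_lt.1 hj), dropColumns] at h

lemma setOf_reachable_subset {l : List ℕ} (hl : IsPartition l) :
    {μ | Reachable l μ} ⊆ ↑((insert [] ((cells l).image (subdiagramAt l))).erase l) := by
  intro μ hμ
  have hne : μ ≠ l := fun h => (wt_lt_of_reachable hμ).ne (congrArg wt h)
  obtain ⟨i, j, rfl⟩ := exists_eq_dropColumns_drop_of_reflTransGen hl hμ.to_reflTransGen
  by_cases hnil : dropColumns i (l.drop j) = []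
  · simp [hnil] at hne ⊢
    exact hne
  · obtain ⟨c, hc, hc_eq⟩ := exists_mem_cells_of_dropColumns_drop_ne_nil hl.1 hnil
    simp only [Finset.coe_erase, Finset.coe_insert, Finset.coe_image]
    exact ⟨Or.inr ⟨c, hc, hc_eq⟩, hne⟩

lemma dropColumns_sub_one_cons_of_forall_lt {a : ℕ} {t : List ℕ} (ha : 0 < a)
    (ht : ∀ x ∈ t, x < a) :
    dropColumns (a - 1) (a :: t) = [1] := by
  rw [dropColumns_cons_of_lt _ (by omega), dropColumns_eq_nil fun x hx => by grind]
  grind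

lemma subdiagramAt_eq_singleton {l : List ℕ} (hl : IsPartition l) (j : Fin l.length)
    (hj : ∀ x ∈ l.drop (j + 1), x < l[j]) : subdiagramAt l ⟨j, l[j] - 1⟩ = [1] := by
  rw [subdiagramAt, List.drop_eq_getElem_cons j.2]
  exact dropColumns_sub_one_cons_of_forall_lt (hl.2 _ (List.getElem_mem _)) hj

lemma mk_getElem_sub_one_mem_cells {l : List ℕ} (hl : IsPartition l) (j : Fin l.length) :
    ⟨j, l[j] - 1⟩ ∈ cells l := by
  simp only [cells, Finset.mem_sigma, Finset.mem_univ, Finset.mem_range, true_and]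
  exact Nat.sub_lt (hl.2 _ (List.getElem_mem j.2)) one_pos

lemma exists_getElem_succ_lt_getElem {l : List ℕ} (hl : IsPartition l) (hne : l ≠ [])
    (hrect : ¬ ∃ a b : ℕ, 0 < a ∧ 0 < b ∧ l = List.replicate b a) :
    ∃ (j : ℕ) (hj : j + 1 < l.length), l[j + 1] < l[j] := by
  have hchain : ¬ l.IsChain (· = ·) := by
    obtain ⟨a, t, rfl⟩ := List.exists_cons_of_ne_nil hne
    rw [List.isChain_cons_eq_iff_eq_replicate]
    intro ht
    exact hrect ⟨a, t.length + 1, hl.2 a List.mem_cons_self, t.length.succ_pos,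
      by rw [List.replicate_succ, ← ht]⟩
  obtain ⟨j, hj, hneq⟩ := List.exists_not_getElem_of_not_isChain hchain
  exact ⟨j, hj, lt_of_le_of_ne (List.pairwise_iff_getElem.1 hl.1 j (j + 1) _ _ j.lt_succ_self)
    (Ne.symm hneq)⟩

lemma card_image_subdiagramAt_lt {l : List ℕ} (hl : IsPartition l) (hne : l ≠ [])
    (hrect : ¬ ∃ a b : ℕ, 0 < a ∧ 0 < b ∧ l = List.replicate b a) :
    ((cells l).image (subdiagramAt l)).card < l.sum := by
  obtain ⟨j, hj, hlt⟩ := exists_getElem_succ_lt_getElem hl hne hrect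
  let descent : Fin l.length := ⟨j, by omega⟩
  let bottom : Fin l.length := ⟨l.length - 1, by omega⟩
  have h_descent : subdiagramAt l ⟨descent, l[descent] - 1⟩ = [1] :=
    subdiagramAt_eq_singleton hl descent fun x hx =>
      (le_getElem_of_mem_drop hl.1 hj hx).trans_lt hlt
  have h_bottom : subdiagramAt l ⟨bottom, l[bottom] - 1⟩ = [1] :=
    subdiagramAt_eq_singleton hl bottom fun x hx => by
      simp [bottom, List.drop_eq_nil_of_le (by omega : l.length ≤ l.length - 1 + 1)] at hx
  have h_ne :
      (⟨descent, l[descent] - 1⟩ : Σ _ : Fin l.length, ℕ) ≠ ⟨bottom, l[bottom] - 1⟩ := by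
    intro h
    have := congrArg (fun c => c.1.1) h
    simp only [descent, bottom] at this
    omega
  rw [← card_cells]
  refine lt_of_le_of_ne Finset.card_image_le fun h => h_ne ?_
  exact Finset.card_image_iff.1 h (mk_getElem_sub_one_mem_cells hl _)
    (mk_getElem_sub_one_mem_cells hl _) (h_descent.trans h_bottom.symm)

/-- A non-rectangular partition of `N > 0` has strictly fewer than `N`
distinct partitions reachable from it in LCTR. -/
theorem reachable_card_lt_of_not_rectangle (N : ℕ) (hN : 0 < N) (l : List ℕ)
    (hl : IsPartition l) (hsum : l.sum = N)
    (hrect : ¬ ∃ a b : ℕ, 0 < a ∧ 0 < b ∧ l = List.replicate b a) :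
    {μ : List ℕ | Reachable l μ}.Finite ∧
    {μ : List ℕ | Reachable l μ}.ncard < N := by
  have hne : l ≠ [] := by
    rintro rfl
    simp only [List.sum_nil] at hsum
    omega
  set positions := insert [] ((cells l).image (subdiagramAt l))
  have hsub := setOf_reachable_subset hl
  have hl_mem : l ∈ positions := Finset.mem_insert_of_mem (mem_image_subdiagramAt_self hl hne)
  refine ⟨(positions.erase l).finite_toSet.subset hsub, ?_⟩
  calc {μ | Reachable l μ}.ncard
      ≤ (positions.erase l).card :=
        (Set.ncard_le_ncard hsub (Finset.finite_toSet _)).trans_eq (Set.ncard_coe_finset _)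
    _ = positions.card - 1 := Finset.card_erase_of_mem hl_mem
    _ ≤ ((cells l).image (subdiagramAt l)).card := by
        have : positions.card ≤ _ + 1 := Finset.card_insert_le _ _
        omega
    _ < N := hsum ▸ card_image_subdiagramAt_lt hl hne hrect
end
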